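/- For real numbers μ > 0, b with 0 < b < μ, a > 0 and c < a, the integral ∫₀^∞ t^{μ-1} e^{-a t} · ₁F₁(b; μ; c t) dt equals Γ(μ) · a^{b-μ} · (a - c)^{-b}. -/

import Mathlib

open MeasureTheory Real Set

/-- Rising factorial (Pochhammer symbol) `(x)_n`. -/
noncomputable def pochh (x : ℝ) (n : ℕ) : ℝ := ∏ i ∈ Finset.range n, (x + i)

/-- Kummer's confluent hypergeometric function `₁F₁(a; b; z)`. -/
noncomputable def oneF1 (a b z : ℝ) : ℝ :=
  ∑' n : ℕ, pochh a n * z ^ n / (pochh b n * n.factorial)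

/-- Humbert's two-variable confluent hypergeometric function `Φ₂`. -/
noncomputable def Phi2 (b1 b2 c x y : ℝ) : ℝ :=
  ∑' q : ℕ × ℕ, pochh b1 q.1 * pochh b2 q.2 * x ^ q.1 * y ^ q.2 /
    (pochh c (q.1 + q.2) * q.1.factorial * q.2.factorial)

/-- `N`-variable confluent hypergeometric function `Φ₂^{(N)}`. -/
noncomputable def PhiN {ι : Type*} [Fintype ι] (b : ι → ℝ) (c : ℝ) (x : ι → ℝ) : ℝ :=
  ∑' m : ι → ℕ,
    (∏ i, pochh (b i) (m i) * x i ^ m i / (m i).factorial) / pochh c (∑ i, m i)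

/-- Lauricella `F_D` (Appell `F₁`) of two variables. -/
noncomputable def FD2 (a b1 b2 c y1 y2 : ℝ) : ℝ :=
  ∑' q : ℕ × ℕ, pochh a (q.1 + q.2) * pochh b1 q.1 * pochh b2 q.2 * y1 ^ q.1 * y2 ^ q.2 /
    (pochh c (q.1 + q.2) * q.1.factorial * q.2.factorial)

/-- The extended η-μ instantaneous SNR probability density function. -/
noncomputable def extEtaMuPDF (μ γbar η p γ : ℝ) : ℝ :=
  (1 / Real.Gamma μ) *
    ((μ * ((1 + η) / (1 + p)) / γbar) * (p / η) ^ (p / (1 + p))) ^ μ *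
    γ ^ (μ - 1) * Real.exp (-(μ * ((1 + η) / (1 + p)) / γbar) * γ) *
    oneF1 (μ * p / (1 + p)) μ (μ * ((1 + η) / (1 + p)) * (η - p) / (η * γbar) * γ)

lemma pochh_zero (x : ℝ) : pochh x 0 = 1 := by simp [pochh]

lemma pochh_succ (x : ℝ) (n : ℕ) : pochh x (n + 1) = pochh x n * (x + n) := by
  rw [pochh, Finset.prod_range_succ]; rfl

lemma pochh_succ_left (x : ℝ) (n : ℕ) : pochh x (n + 1) = x * pochh (x + 1) n := by
  rw [pochh, Finset.prod_range_succ', pochh]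
  rw [Nat.cast_zero, add_zero, mul_comm]
  congr 1
  exact Finset.prod_congr rfl fun i _ => by push_cast; ring

lemma pochh_pos {x : ℝ} (hx : 0 < x) (n : ℕ) : 0 < pochh x n := by
  apply Finset.prod_pos
  intro i _
  positivity

lemma pochh_le {x y : ℝ} (hx : 0 < x) (hxy : x ≤ y) (n : ℕ) : pochh x n ≤ pochh y n := by
  apply Finset.prod_le_prod
  · intro i _; positivity
  · intro i _; linarith

lemma Gamma_add_nat {x : ℝ} (hx : 0 < x) (n : ℕ) :
    Real.Gamma (x + n) = pochh x n * Real.Gamma x := by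
  induction n with
  | zero => simp [pochh_zero]
  | succ n ih =>
    have hxn : x + (n : ℝ) ≠ 0 := by positivity
    have h : (x + ((n : ℕ) + 1 : ℕ) : ℝ) = (x + n) + 1 := by push_cast; ring
    rw [h, Real.Gamma_add_one hxn, ih, pochh_succ]; ring

lemma vandermonde (x : ℝ) : ∀ (n : ℕ) (y : ℝ),
    (∑ k ∈ Finset.range (n + 1),
      (-1 : ℝ) ^ k * (n.choose k : ℝ) * pochh x k * ∏ i ∈ Finset.Ico k n, (y + (i : ℝ)))
      = pochh (y - x) n := by
  intro n
  induction n with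
  | zero => intro y; simp [pochh_zero]
  | succ n ih =>
    intro y
    set P : ℕ → ℝ := fun k => ∏ i ∈ Finset.Ico k (n + 1), (y + (i : ℝ)) with hP
    set F : ℕ → ℝ := fun k => (-1 : ℝ) ^ k * ((n + 1).choose k : ℝ) * pochh x k * P k with hF
    set G : ℕ → ℝ := fun k => (-1 : ℝ) ^ k * (n.choose k : ℝ) * pochh x k * P k with hG
    set H : ℕ → ℝ := fun k =>
      (-1 : ℝ) ^ k * (n.choose k : ℝ) * pochh x k * ((x + k) * P (k + 1)) with hH
    have key : ∀ k : ℕ, F (k + 1) = G (k + 1) - H k := by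
      intro k
      have hch : (((n + 1).choose (k + 1) : ℕ) : ℝ) = (n.choose k : ℝ) + (n.choose (k + 1) : ℝ) := by
        exact_mod_cast congrArg (Nat.cast : ℕ → ℝ) (Nat.choose_succ_succ n k)
      simp only [hF, hG, hH, hch, pochh_succ]
      push_cast
      ring
    have step1 : ∑ k ∈ Finset.range (n + 2), F k
        = (∑ k ∈ Finset.range (n + 1), G k) - ∑ k ∈ Finset.range (n + 1), H k := by
      rw [Finset.sum_range_succ' F (n + 1)]
      have hF0 : F 0 = G 0 := by simp [hF, hG]
      calc (∑ k ∈ Finset.range (n + 1), F (k + 1)) + F 0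
          = (∑ k ∈ Finset.range (n + 1), (G (k + 1) - H k)) + G 0 := by
            rw [hF0]; congr 1; exact Finset.sum_congr rfl fun k _ => key k
        _ = ((∑ k ∈ Finset.range (n + 1), G (k + 1)) + G 0)
            - ∑ k ∈ Finset.range (n + 1), H k := by
            rw [Finset.sum_sub_distrib]; ring
        _ = (∑ k ∈ Finset.range (n + 2), G k) - ∑ k ∈ Finset.range (n + 1), H k := by
            rw [Finset.sum_range_succ' G (n + 1)]
        _ = (∑ k ∈ Finset.range (n + 1), G k) - ∑ k ∈ Finset.range (n + 1), H k := by
            rw [Finset.sum_range_succ G (n + 1)]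
            simp [hG, Nat.choose_succ_self]
    have step2 : ∀ k ∈ Finset.range (n + 1), G k - H k
        = (y - x) * ((-1 : ℝ) ^ k * (n.choose k : ℝ) * pochh x k *
            ∏ i ∈ Finset.Ico k n, ((y + 1) + (i : ℝ))) := by
      intro k hk
      have hkn : k < n + 1 := Finset.mem_range.mp hk
      have hPk : P k = (y + k) * P (k + 1) := by
        simp only [hP]
        exact Finset.prod_eq_prod_Ico_succ_bot hkn _
      have hre : P (k + 1) = ∏ i ∈ Finset.Ico k n, ((y + 1) + (i : ℝ)) := by
        simp only [hP]
        rw [Finset.prod_Ico_eq_prod_range, Finset.prod_Ico_eq_prod_range]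
        rw [Nat.succ_sub_succ]
        exact Finset.prod_congr rfl fun i _ => by push_cast; ring
      simp only [hG, hH, hPk, hre]
      ring
    calc ∑ k ∈ Finset.range (n + 2), F k
        = ∑ k ∈ Finset.range (n + 1), (G k - H k) := by
          rw [step1, Finset.sum_sub_distrib]
      _ = (y - x) * ∑ k ∈ Finset.range (n + 1),
            ((-1 : ℝ) ^ k * (n.choose k : ℝ) * pochh x k *
              ∏ i ∈ Finset.Ico k n, ((y + 1) + (i : ℝ))) := by
          rw [Finset.mul_sum]
          exact Finset.sum_congr rfl step2
      _ = (y - x) * pochh ((y + 1) - x) n := by rw [ih (y + 1)]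
      _ = pochh (y - x) (n + 1) := by
          rw [pochh_succ_left]
          congr 2
          ring

lemma summable_oneF1_norm {b μ : ℝ} (hb : 0 < b) (hbμ : b ≤ μ) (z : ℝ) :
    Summable (fun k : ℕ => ‖pochh b k * z ^ k / (pochh μ k * k.factorial)‖) := by
  have hμ : 0 < μ := lt_of_lt_of_le hb hbμ
  refine Summable.of_nonneg_of_le (fun k => norm_nonneg _) (fun k => ?_)
    (Real.summable_pow_div_factorial |z|)
  have h1 : 0 < pochh μ k * (k.factorial : ℝ) := by
    have := pochh_pos hμ k
    positivity
  rw [Real.norm_eq_abs, abs_div, abs_mul, abs_pow, abs_of_pos h1, abs_of_pos (pochh_pos hb k)]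
  rw [div_le_div_iff₀ h1 (by positivity)]
  have h2 : pochh b k ≤ pochh μ k := pochh_le hb hbμ k
  have h3 : (0:ℝ) ≤ |z| ^ k := by positivity
  calc pochh b k * |z| ^ k * (k.factorial : ℝ)
      ≤ pochh μ k * |z| ^ k * (k.factorial : ℝ) := by
        have := pochh_pos hb k
        gcongr
    _ = |z| ^ k * (pochh μ k * k.factorial) := by ring

lemma coeff_id {b μ : ℝ} (hμ : 0 < μ) (n : ℕ) :
    ∑ k ∈ Finset.range (n + 1),
        (-1 : ℝ) ^ k * pochh (μ - b) k / (pochh μ k * k.factorial * (n - k).factorial)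
      = pochh b n / (pochh μ n * n.factorial) := by
  have hV := vandermonde (μ - b) n μ
  have hb' : μ - (μ - b) = b := by ring
  rw [hb'] at hV
  rw [← hV, Finset.sum_div]
  refine Finset.sum_congr rfl fun k hk => ?_
  have hkn : k ≤ n := Nat.lt_succ_iff.mp (Finset.mem_range.mp hk)
  have hsplit : pochh μ k * ∏ i ∈ Finset.Ico k n, (μ + (i:ℝ)) = pochh μ n :=
    Finset.prod_range_mul_prod_Ico _ hkn
  have hch : (n.choose k : ℝ) * k.factorial * (n - k).factorial = n.factorial := by
    exact_mod_cast congrArg (Nat.cast : ℕ → ℝ) (Nat.choose_mul_factorial_mul_factorial hkn)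
  have h1 : (0:ℝ) < pochh μ k * k.factorial * (n - k).factorial := by
    have := pochh_pos hμ k
    positivity
  have h2 : (0:ℝ) < pochh μ n * n.factorial := by
    have := pochh_pos hμ n
    positivity
  rw [div_eq_div_iff h1.ne' h2.ne', ← hsplit, ← hch]
  ring

lemma real_exp_tsum (z : ℝ) : Real.exp z = ∑' n : ℕ, z ^ n / n.factorial := by
  rw [Real.exp_eq_exp_ℝ, NormedSpace.exp_eq_tsum_div]

lemma kummer {b μ : ℝ} (hb : 0 < b) (hbμ : b < μ) (z : ℝ) :
    oneF1 b μ z = Real.exp z * oneF1 (μ - b) μ (-z) := by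
  have hμ : 0 < μ := hb.trans hbμ
  have hμb : 0 < μ - b := by linarith
  set A : ℕ → ℝ := fun k => pochh (μ - b) k * (-z) ^ k / (pochh μ k * k.factorial) with hA
  set B : ℕ → ℝ := fun m => z ^ m / m.factorial with hB
  have hAs : Summable (fun k => ‖A k‖) := summable_oneF1_norm hμb (by linarith) (-z)
  have hBs : Summable (fun m => ‖B m‖) := by
    have := Real.summable_pow_div_factorial |z|
    refine this.congr fun m => ?_
    rw [Real.norm_eq_abs, abs_div, abs_pow, abs_of_pos (by positivity : (0:ℝ) < (m.factorial : ℝ))]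
  have hexp : Real.exp z = ∑' m : ℕ, B m := real_exp_tsum z
  have hprod := tsum_mul_tsum_eq_tsum_sum_antidiagonal_of_summable_norm hAs hBs
  rw [oneF1, oneF1, hexp, mul_comm]
  have : (∑' (n : ℕ), pochh (μ - b) n * (-z) ^ n / (pochh μ n * n.factorial)) = ∑' n, A n := rfl
  rw [this, hprod]
  refine tsum_congr fun n => ?_
  rw [Finset.Nat.sum_antidiagonal_eq_sum_range_succ_mk]
  have key : ∀ k ∈ Finset.range (n + 1), A k * B (n - k)
      = z ^ n * ((-1 : ℝ) ^ k * pochh (μ - b) k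
          / (pochh μ k * k.factorial * (n - k).factorial)) := by
    intro k hk
    have hkn : k ≤ n := Nat.lt_succ_iff.mp (Finset.mem_range.mp hk)
    have hz : z ^ k * z ^ (n - k) = z ^ n := by
      rw [← pow_add]
      congr 1
      omega
    simp only [hA, hB]
    rw [← hz]
    ring
  rw [Finset.sum_congr rfl key, ← Finset.mul_sum, coeff_id hμ n]
  ring

lemma summable_bin {b x : ℝ} (hb : 0 < b) (hx : |x| < 1) :
    Summable (fun n : ℕ => pochh b n * x ^ n / n.factorial) := by
  rcases eq_or_ne x 0 with rfl | hx0
  · apply summable_of_ne_finset_zero (s := {0})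
    intro n hn
    have : n ≠ 0 := by simpa using hn
    rw [zero_pow this, mul_zero, zero_div]
  · set f : ℕ → ℝ := fun n => pochh b n * x ^ n / n.factorial with hf
    have hne : ∀ n, f n ≠ 0 := by
      intro n
      have h1 := pochh_pos hb n
      have h2 : x ^ n ≠ 0 := pow_ne_zero n hx0
      have h3 : (n.factorial : ℝ) ≠ 0 := by positivity
      simp only [hf]
      exact div_ne_zero (mul_ne_zero h1.ne' h2) h3
    have hrat : ∀ n : ℕ, ‖f (n + 1)‖ / ‖f n‖ = (b + n) / (n + 1) * |x| := by
      intro n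
      have h1 : f (n + 1) = f n * ((b + n) * x / (n + 1)) := by
        simp only [hf, pochh_succ, pow_succ, Nat.factorial_succ]
        have h3 : (n.factorial : ℝ) ≠ 0 := by positivity
        push_cast
        field_simp
      rw [h1, norm_mul, mul_comm (‖f n‖), mul_div_assoc, div_self (norm_ne_zero_iff.mpr (hne n)),
        mul_one]
      rw [Real.norm_eq_abs, abs_div, abs_mul, abs_of_pos (by positivity : (0:ℝ) < b + n),
        abs_of_pos (by positivity : (0:ℝ) < (n:ℝ) + 1)]
      ring
    apply summable_of_ratio_test_tendsto_lt_one hx (Filter.Eventually.of_forall hne)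
    have h0 : Filter.Tendsto (fun n : ℕ => (b + n) / (n + 1)) Filter.atTop (nhds 1) := by
      have : ∀ n : ℕ, (b + n) / (n + 1) = 1 + (b - 1) / (n + 1) := by
        intro n
        have : ((n : ℝ) + 1) ≠ 0 := by positivity
        field_simp
        ring
      rw [funext this]
      have h2 : Filter.Tendsto (fun n : ℕ => (b - 1) / ((n : ℝ) + 1)) Filter.atTop (nhds 0) :=
        Filter.Tendsto.div_atTop tendsto_const_nhds
          (Filter.tendsto_atTop_add_const_right _ 1 tendsto_natCast_atTop_atTop)
      simpa using tendsto_const_nhds.add h2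
    have := h0.mul_const |x|
    rw [one_mul] at this
    exact (Filter.tendsto_congr hrat).mpr this

lemma integrableGamma {p r : ℝ} (hp : 0 < p) (hr : 0 < r) :
    IntegrableOn (fun t : ℝ => t ^ (p - 1) * Real.exp (-(r * t))) (Ioi 0) := by
  have h0 : IntegrableOn (fun x : ℝ => Real.exp (-x) * x ^ (p - 1)) (Ioi 0) :=
    Real.GammaIntegral_convergent hp
  have h1 : IntegrableOn (fun x : ℝ => Real.exp (-(r * x)) * (r * x) ^ (p - 1)) (Ioi 0) := by
    have := (integrableOn_Ioi_comp_mul_left_iff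
      (fun x : ℝ => Real.exp (-x) * x ^ (p - 1)) 0 hr).mpr
    rw [mul_zero] at this
    exact this h0
  have h2 : IntegrableOn (fun x : ℝ => ((r : ℝ) ^ (p - 1))⁻¹ *
      (Real.exp (-(r * x)) * (r * x) ^ (p - 1))) (Ioi 0) := h1.const_mul _
  refine MeasureTheory.IntegrableOn.congr_fun h2 (fun t ht => ?_) measurableSet_Ioi
  rw [mem_Ioi] at ht
  rw [Real.mul_rpow hr.le ht.le]
  have hrp : (r : ℝ) ^ (p - 1) ≠ 0 := by
    have := Real.rpow_pos_of_pos hr (p - 1)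
    exact this.ne'
  field_simp

lemma master (s r : ℝ) (aa : ℕ → ℝ) (hs : 0 < s) (hr : 0 < r)
    (hsum : Summable fun n : ℕ => |aa n| * Real.Gamma (s + n) / r ^ (s + (n : ℝ))) :
    ∫ t in Ioi (0 : ℝ), t ^ (s - 1) * Real.exp (-(r * t)) * ∑' n : ℕ, aa n * t ^ n
      = ∑' n : ℕ, aa n * Real.Gamma (s + n) / r ^ (s + (n : ℝ)) := by
  set F : ℕ → ℝ → ℝ := fun n t => aa n * (t ^ (s + (n : ℝ) - 1) * Real.exp (-(r * t))) with hF
  have hint : ∀ n : ℕ, IntegrableOn (F n) (Ioi 0) := by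
    intro n
    exact (integrableGamma (by positivity : (0:ℝ) < s + n) hr).const_mul _
  have hval : ∀ n : ℕ, ∫ t in Ioi (0:ℝ), F n t
      = aa n * Real.Gamma (s + n) / r ^ (s + (n : ℝ)) := by
    intro n
    simp only [hF]
    rw [MeasureTheory.integral_const_mul, Real.integral_rpow_mul_exp_neg_mul_Ioi (by positivity) hr]
    rw [one_div, Real.inv_rpow hr.le]
    ring
  have hnorm : ∀ n : ℕ, ∫ t in Ioi (0:ℝ), ‖F n t‖
      = |aa n| * Real.Gamma (s + n) / r ^ (s + (n : ℝ)) := by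
    intro n
    have : ∀ t ∈ Ioi (0:ℝ), ‖F n t‖ = |aa n| * (t ^ (s + (n : ℝ) - 1) * Real.exp (-(r * t))) := by
      intro t ht
      rw [mem_Ioi] at ht
      have h1 : (0:ℝ) ≤ t ^ (s + (n : ℝ) - 1) := Real.rpow_nonneg ht.le _
      rw [Real.norm_eq_abs, abs_mul, abs_mul, abs_of_nonneg h1,
        abs_of_pos (Real.exp_pos _)]
    rw [setIntegral_congr_fun measurableSet_Ioi this]
    rw [MeasureTheory.integral_const_mul, Real.integral_rpow_mul_exp_neg_mul_Ioi (by positivity) hr]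
    rw [one_div, Real.inv_rpow hr.le]
    ring
  have hsum' : Summable fun n : ℕ => ∫ t in Ioi (0:ℝ), ‖F n t‖ := by
    refine hsum.congr fun n => ?_
    rw [hnorm n]
  have hswap := MeasureTheory.integral_tsum_of_summable_integral_norm hint hsum'
  have hgoal : ∫ t in Ioi (0:ℝ), t ^ (s - 1) * Real.exp (-(r * t)) * ∑' n : ℕ, aa n * t ^ n
      = ∫ t in Ioi (0:ℝ), ∑' n : ℕ, F n t := by
    refine setIntegral_congr_fun measurableSet_Ioi (fun t ht => ?_)
    rw [mem_Ioi] at ht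
    rw [← tsum_mul_left]
    refine tsum_congr fun n => ?_
    simp only [hF]
    rw [show s + (n : ℝ) - 1 = (s - 1) + (n : ℝ) by ring, Real.rpow_add ht,
      Real.rpow_natCast]
    ring
  rw [hgoal, ← hswap]
  exact tsum_congr hval

lemma binomial_sum {b x : ℝ} (hb : 0 < b) (hx : |x| < 1) :
    ∑' n : ℕ, pochh b n * x ^ n / n.factorial = (1 - x) ^ (-b) := by
  have hx' := abs_lt.mp hx
  have h1x : 0 < 1 - x := by linarith
  set r : ℝ := (1 - x)⁻¹ with hrdef
  have hr : 0 < r := inv_pos.mpr h1x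
  set y : ℝ := x * r with hydef
  have hyr : y / r = x := by
    field_simp [hydef]
    linear_combination hydef
  have habs : |y| / r = |x| := by
    rw [hydef, abs_mul, abs_of_pos hr]
    field_simp
  have hΓ : 0 < Real.Gamma b := Real.Gamma_pos_of_pos hb
  have hterm : ∀ n : ℕ, |y ^ n / n.factorial| * Real.Gamma (b + n) / r ^ (b + (n : ℝ))
      = (Real.Gamma b / r ^ b) * (pochh b n * |x| ^ n / n.factorial) := by
    intro n
    have hfac : (0:ℝ) < (n.factorial : ℝ) := by positivity
    rw [Gamma_add_nat hb n, abs_div, abs_pow, abs_of_pos hfac,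
      Real.rpow_add hr, Real.rpow_natCast]
    rw [show |x| = |y| / r from habs.symm]
    have hrn : (0:ℝ) < r ^ n := by positivity
    have hrb : (0:ℝ) < r ^ b := Real.rpow_pos_of_pos hr b
    field_simp
    rw [div_pow]
    field_simp
  have hsum : Summable fun n : ℕ => |y ^ n / n.factorial| * Real.Gamma (b + n) / r ^ (b + (n : ℝ)) := by
    refine Summable.congr ?_ (fun n => (hterm n).symm)
    exact (summable_bin hb (by rwa [abs_abs])).mul_left _
  have hM := master b r (fun n => y ^ n / n.factorial) hb hr hsum
  -- LHS of hM equals Gamma b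
  have hLHS : ∫ t in Ioi (0:ℝ), t ^ (b - 1) * Real.exp (-(r * t))
      * ∑' n : ℕ, (y ^ n / n.factorial) * t ^ n = Real.Gamma b := by
    have hfun : ∀ t : ℝ, t ^ (b - 1) * Real.exp (-(r * t))
        * ∑' n : ℕ, (y ^ n / n.factorial) * t ^ n
        = t ^ (b - 1) * Real.exp (-(1 * t)) := by
      intro t
      have hexp : ∑' n : ℕ, (y ^ n / n.factorial) * t ^ n = Real.exp (y * t) := by
        rw [real_exp_tsum (y * t)]
        refine tsum_congr fun n => ?_
        rw [mul_pow]
        ring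
      rw [hexp, mul_assoc, ← Real.exp_add]
      have hry : r - y = 1 := by
        rw [hydef, hrdef]
        field_simp
      have : -(r * t) + y * t = -(1 * t) := by linear_combination (-t) * hry
      rw [this]
    rw [funext hfun, Real.integral_rpow_mul_exp_neg_mul_Ioi hb one_pos]
    simp
  rw [hLHS] at hM
  -- RHS of hM
  have hRHS : ∑' n : ℕ, (y ^ n / n.factorial) * Real.Gamma (b + n) / r ^ (b + (n : ℝ))
      = (Real.Gamma b / r ^ b) * ∑' n : ℕ, pochh b n * x ^ n / n.factorial := by
    rw [← tsum_mul_left]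
    refine tsum_congr fun n => ?_
    have hfac : (0:ℝ) < (n.factorial : ℝ) := by positivity
    rw [Gamma_add_nat hb n, Real.rpow_add hr, Real.rpow_natCast]
    rw [show x = y / r from hyr.symm]
    have hrn : (0:ℝ) < r ^ n := by positivity
    have hrb : (0:ℝ) < r ^ b := Real.rpow_pos_of_pos hr b
    field_simp
    rw [div_pow]
    field_simp
  rw [hRHS] at hM
  have hrb : (0:ℝ) < r ^ b := Real.rpow_pos_of_pos hr b
  have hc : Real.Gamma b / r ^ b ≠ 0 := by positivity
  have h2 : (Real.Gamma b / r ^ b) * (∑' n : ℕ, pochh b n * x ^ n / n.factorial)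
      = (Real.Gamma b / r ^ b) * r ^ b := by
    rw [← hM]
    field_simp
  have : ∑' n : ℕ, pochh b n * x ^ n / n.factorial = r ^ b := mul_left_cancel₀ hc h2
  rw [this, hrdef, ← Real.rpow_neg_one (1 - x), ← Real.rpow_mul h1x.le]
  ring_nf

lemma core {β μ r C : ℝ} (hβ : 0 < β) (hμ : 0 < μ) (hr : 0 < r) (hC : |C| < r) :
    ∫ t in Ioi (0 : ℝ), t ^ (μ - 1) * Real.exp (-(r * t)) * oneF1 β μ (C * t)
      = Real.Gamma μ / r ^ μ * (1 - C / r) ^ (-β) := by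
  set aa : ℕ → ℝ := fun n => pochh β n * C ^ n / (pochh μ n * n.factorial) with haa
  have hCr : |C / r| < 1 := by
    rw [abs_div, abs_of_pos hr, div_lt_one hr]
    exact hC
  have hterm : ∀ n : ℕ, |aa n| * Real.Gamma (μ + n) / r ^ (μ + (n : ℝ))
      = (Real.Gamma μ / r ^ μ) * (pochh β n * |C / r| ^ n / n.factorial) := by
    intro n
    have h1 : 0 < pochh μ n := pochh_pos hμ n
    have h2 : 0 < pochh β n := pochh_pos hβ n
    have hfac : (0:ℝ) < (n.factorial : ℝ) := by positivity
    have hrn : (0:ℝ) < r ^ n := by positivity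
    have hrμ : (0:ℝ) < r ^ μ := Real.rpow_pos_of_pos hr μ
    simp only [haa]
    rw [Gamma_add_nat hμ n, Real.rpow_add hr, Real.rpow_natCast, abs_div, abs_mul, abs_pow,
      abs_of_pos h2, abs_of_pos (by positivity : (0:ℝ) < pochh μ n * n.factorial),
      abs_div, abs_of_pos hr]
    field_simp
    rw [div_pow]
    field_simp
  have hsum : Summable fun n : ℕ => |aa n| * Real.Gamma (μ + n) / r ^ (μ + (n : ℝ)) := by
    refine Summable.congr ?_ (fun n => (hterm n).symm)
    exact (summable_bin hβ (by rwa [abs_abs])).mul_left _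
  have hM := master μ r aa hμ hr hsum
  have hL : ∀ t : ℝ, oneF1 β μ (C * t) = ∑' n : ℕ, aa n * t ^ n := by
    intro t
    refine tsum_congr fun n => ?_
    simp only [haa]
    rw [mul_pow]
    ring
  simp only [hL]
  rw [hM]
  have hR : ∀ n : ℕ, aa n * Real.Gamma (μ + n) / r ^ (μ + (n : ℝ))
      = (Real.Gamma μ / r ^ μ) * (pochh β n * (C / r) ^ n / n.factorial) := by
    intro n
    have h1 : 0 < pochh μ n := pochh_pos hμ n
    have hfac : (0:ℝ) < (n.factorial : ℝ) := by positivity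
    have hrn : (0:ℝ) < r ^ n := by positivity
    have hrμ : (0:ℝ) < r ^ μ := Real.rpow_pos_of_pos hr μ
    simp only [haa]
    rw [Gamma_add_nat hμ n, Real.rpow_add hr, Real.rpow_natCast, div_pow]
    field_simp
  rw [tsum_congr hR, tsum_mul_left, binomial_sum hβ hCr]


theorem stmt2 (μ b a c : ℝ) (hμ : 0 < μ) (hb0 : 0 < b) (hbμ : b < μ) (ha : 0 < a)
    (hc : c < a) :
    ∫ t in Ioi (0 : ℝ), t ^ (μ - 1) * Real.exp (-a * t) * oneF1 b μ (c * t) =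
      Real.Gamma μ * a ^ (b - μ) * (a - c) ^ (-b) := by
  have hac : 0 < a - c := by linarith
  rcases le_or_gt 0 c with hc0 | hc0
  · -- 0 ≤ c < a : direct
    have hCa : |c| < a := by rwa [abs_of_nonneg hc0]
    have h1 : ∀ t : ℝ, Real.exp (-a * t) = Real.exp (-(a * t)) := by
      intro t; rw [neg_mul]
    simp only [h1]
    rw [core hb0 hμ ha hCa]
    have h2 : 1 - c / a = (a - c) / a := by field_simp
    rw [h2, Real.div_rpow hac.le ha.le, Real.rpow_neg hac.le, Real.rpow_neg ha.le,
      Real.rpow_sub ha]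
    have hb1 : (0:ℝ) < a ^ b := Real.rpow_pos_of_pos ha b
    have hb2 : (0:ℝ) < a ^ μ := Real.rpow_pos_of_pos ha μ
    have hb3 : (0:ℝ) < (a - c) ^ b := Real.rpow_pos_of_pos hac b
    field_simp
  · -- c < 0 : Kummer
    have hgoal : ∀ t : ℝ, t ^ (μ - 1) * Real.exp (-a * t) * oneF1 b μ (c * t)
        = t ^ (μ - 1) * Real.exp (-((a - c) * t)) * oneF1 (μ - b) μ (-c * t) := by
      intro t
      rw [kummer hb0 hbμ (c * t)]
      rw [← neg_mul, ← mul_assoc]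
      congr 1
      rw [mul_assoc, ← Real.exp_add]
      congr 1
      ring
    simp only [hgoal]
    have hμb : 0 < μ - b := by linarith
    have hCr : |-c| < a - c := by
      rw [abs_of_pos (by linarith : (0:ℝ) < -c)]
      linarith
    rw [core hμb hμ hac hCr]
    have h2 : 1 - (-c) / (a - c) = a / (a - c) := by field_simp; ring
    rw [h2, Real.div_rpow ha.le hac.le, Real.rpow_neg ha.le, Real.rpow_neg hac.le,
      Real.rpow_neg hac.le, Real.rpow_sub ha, Real.rpow_sub ha, Real.rpow_sub hac]
    have hb1 : (0:ℝ) < a ^ b := Real.rpow_pos_of_pos ha b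
    have hb2 : (0:ℝ) < a ^ μ := Real.rpow_pos_of_pos ha μ
    have hb3 : (0:ℝ) < (a - c) ^ b := Real.rpow_pos_of_pos hac b
    have hb4 : (0:ℝ) < (a - c) ^ μ := Real.rpow_pos_of_pos hac μ
    have hΓ : 0 < Real.Gamma μ := Real.Gamma_pos_of_pos hμ
    field_simp
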